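/- arXiv:1903.01016 — 2 statements merged into one kernel-verified Lean document; each statement's English description precedes it below -/
import Mathlib

section
/- Suppose q̄_{n,s} > 0 for all n, s. Let (w*, b*, d*, γ*) be any minimizer of problem P_τ, and write q*_{n,s} := z_{n,s}ᵀw*_n + b*_n and q*_s := (q*_{1,s},…,q*_{N,s}). Then there exist coefficient vectors a_n ∈ ℝ^S (n = 1,…,N) such that w*_n = Z_n a_n for every n, and for every scenario s satisfying ‖X q*_s + y_s‖₂ < τ, the entry a_{n,s} equals 0 for every inverter n with |q*_{n,s}| < q̄_{n,s}. -/
/-! Fix an inverter `n` and call a scenario active when its voltage constraint or the bound on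
`q_{n,s}` is binding. If `w_n` were not a combination of the `z_{n,s}` over active scenarios,
some `u` would have `z_{n,s} ⬝ᵥ u = 0` on them and `w_n ⬝ᵥ u = 1`. Replacing `w_n` by `w_n - t u`
for small `t > 0` leaves the active constraints untouched, keeps the inactive (strict) ones by
continuity, and strictly shrinks `‖w_n‖₂`; lowering `γ_n` to it decreases the objective since
`μ > 0`, contradicting minimality. The coefficients of that combination are the `a_n`. -/

open Finset

/-- Euclidean (ℓ₂) norm of a vector in ℝ^k. -/
noncomputable def e2 {k : ℕ} (v : Fin k → ℝ) : ℝ := Real.sqrt (∑ i, v i ^ 2)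

/-- Inverter output `q_{n,s} = z_{n,s}ᵀ w_n + b_n` of the linear control rule. -/
noncomputable def qval {N S : ℕ} {M : Fin N → ℕ}
    (z : (n : Fin N) → Fin S → Fin (M n) → ℝ)
    (w : (n : Fin N) → Fin (M n) → ℝ) (b : Fin N → ℝ)
    (n : Fin N) (s : Fin S) : ℝ :=
  (∑ i, z n s i * w n i) + b n

/-- Voltage deviation vector `X q_s + y_s` for scenario `s`. -/
noncomputable def vdev {N S : ℕ} {M : Fin N → ℕ}
    (X : Matrix (Fin N) (Fin N) ℝ)
    (z : (n : Fin N) → Fin S → Fin (M n) → ℝ)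
    (y : Fin S → Fin N → ℝ)
    (w : (n : Fin N) → Fin (M n) → ℝ) (b : Fin N → ℝ)
    (s : Fin S) : Fin N → ℝ :=
  X.mulVec (fun n => qval z w b n s) + y s

/-- Feasibility of `(w, b, d, γ)` for problem `P_τ`. -/
def FeasTau {N S : ℕ} {M : Fin N → ℕ}
    (X : Matrix (Fin N) (Fin N) ℝ)
    (z : (n : Fin N) → Fin S → Fin (M n) → ℝ)
    (y : Fin S → Fin N → ℝ)
    (qbar : Fin N → Fin S → ℝ) (τ : ℝ)
    (w : (n : Fin N) → Fin (M n) → ℝ) (b : Fin N → ℝ)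
    (d : Fin S → ℝ) (γ : Fin N → ℝ) : Prop :=
  (∀ n s, |qval z w b n s| ≤ qbar n s) ∧
  (∀ n, e2 (w n) ≤ γ n) ∧
  (∀ s, 0 ≤ d s ∧ e2 (vdev X z y w b s) ≤ d s + τ)

/-- Objective `F(w,b,d,γ) = (1/S)·Σ_s d_s + μ·Σ_n γ_n` of problem `P_τ`. -/
noncomputable def Fobj {N S : ℕ} (μ : ℝ) (d : Fin S → ℝ) (γ : Fin N → ℝ) : ℝ :=
  (1 / (S : ℝ)) * ∑ s, d s + μ * ∑ n, γ n

open Filter Topology Matrix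

theorem Submodule.exists_dotProduct_eq_one_of_notMem {K ι : Type*} [Field K] [Fintype ι]
    {p : Submodule K (ι → K)} {x : ι → K} (hx : x ∉ p) :
    ∃ u : ι → K, (∀ v ∈ p, v ⬝ᵥ u = 0) ∧ x ⬝ᵥ u = 1 := by
  classical
  obtain ⟨f, hfx, hfp⟩ := p.exists_dual_map_eq_bot_of_notMem hx inferInstance
  set e : ι → K := fun i => f fun j => if i = j then 1 else 0
  have hf : ∀ v, f v = v ⬝ᵥ e := f.pi_apply_eq_sum_univ
  refine ⟨(f x)⁻¹ • e, fun v hv => ?_, ?_⟩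
  · have hfv : f v ∈ (⊥ : Submodule K K) := hfp ▸ Submodule.mem_map_of_mem hv
    rw [dotProduct_smul, ← hf, (Submodule.mem_bot K).mp hfv, smul_zero]
  · rw [dotProduct_smul, ← hf, smul_eq_mul, inv_mul_cancel₀ hfx]

theorem Submodule.exists_sum_smul_eq_of_mem_span_image {R M ι : Type*} [Semiring R]
    [AddCommMonoid M] [Module R M] [Fintype ι] {v : ι → M} {A : Set ι} {x : M}
    (hx : x ∈ span R (v '' A)) : ∃ a : ι → R, ∑ i, a i • v i = x ∧ ∀ i ∉ A, a i = 0 := by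
  obtain ⟨l, hlA, rfl⟩ := Finsupp.mem_span_image_iff_linearCombination R |>.mp hx
  refine ⟨l, ?_, fun i hi => (Finsupp.mem_supported' R l).mp hlA i hi⟩
  rw [Finsupp.linearCombination_apply, Finsupp.sum_fintype _ _ fun i => zero_smul R (v i)]

theorem continuous_e2 {k : ℕ} : Continuous (e2 (k := k)) := by
  unfold e2; fun_prop

theorem eventually_e2_sub_smul_lt {k : ℕ} {v u : Fin k → ℝ} (hvu : 0 < v ⬝ᵥ u) :
    ∀ᶠ t in 𝓝[>] (0 : ℝ), e2 (v - t • u) < e2 v := by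
  have hsq (t : ℝ) :
      ∑ i, (v - t • u) i ^ 2 = ∑ i, v i ^ 2 - t * (2 * (v ⬝ᵥ u) - t * ∑ i, u i ^ 2) := by
    simp only [dotProduct, Finset.mul_sum, ← Finset.sum_sub_distrib]
    refine Finset.sum_congr rfl fun i _ => ?_
    simp only [Pi.sub_apply, Pi.smul_apply, smul_eq_mul]
    ring
  have hsmall : ∀ᶠ t in 𝓝 (0 : ℝ), t * ∑ i, u i ^ 2 < 2 * (v ⬝ᵥ u) :=
    (continuous_id.mul continuous_const).tendsto' 0 0 (zero_mul _) |>.eventually_lt_const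
      (by linarith)
  filter_upwards [self_mem_nhdsWithin, nhdsWithin_le_nhds hsmall] with t (ht : 0 < t) ht'
  refine Real.sqrt_lt_sqrt (by positivity) ?_
  rw [hsq]
  nlinarith [mul_pos ht (sub_pos.mpr ht')]

section Ptau

variable {N S : ℕ} {M : Fin N → ℕ} (X : Matrix (Fin N) (Fin N) ℝ)
  (z : (n : Fin N) → Fin S → Fin (M n) → ℝ) (y : Fin S → Fin N → ℝ)

theorem qval_update_sub_smul (w : (n : Fin N) → Fin (M n) → ℝ) (b : Fin N → ℝ) (n : Fin N)
    (u : Fin (M n) → ℝ) (t : ℝ) (m : Fin N) (s : Fin S) :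
    qval z (Function.update w n (w n - t • u)) b m s =
      qval z w b m s - t * (Pi.single n (z n s ⬝ᵥ u) : Fin N → ℝ) m := by
  rcases eq_or_ne m n with rfl | hm
  · change z m s ⬝ᵥ Function.update w m (w m - t • u) m + b m = z m s ⬝ᵥ w m + b m - t * _
    rw [Function.update_self, dotProduct_sub, dotProduct_smul, smul_eq_mul, Pi.single_eq_same]
    ring
  · simp [qval, hm]

theorem vdev_update_sub_smul (w : (n : Fin N) → Fin (M n) → ℝ) (b : Fin N → ℝ) (n : Fin N)
    (u : Fin (M n) → ℝ) (t : ℝ) (s : Fin S) :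
    vdev X z y (Function.update w n (w n - t • u)) b s =
      X *ᵥ ((fun m => qval z w b m s) - t • Pi.single n (z n s ⬝ᵥ u)) + y s := by
  simp only [vdev, qval_update_sub_smul]
  rfl

def activeScenarios (qbar : Fin N → Fin S → ℝ) (τ : ℝ) (w : (n : Fin N) → Fin (M n) → ℝ)
    (b : Fin N → ℝ) (n : Fin N) : Set (Fin S) :=
  {s | τ ≤ e2 (vdev X z y w b s) ∨ qbar n s ≤ |qval z w b n s|}

variable {X z y} {qbar : Fin N → Fin S → ℝ} {τ : ℝ} {w : (n : Fin N) → Fin (M n) → ℝ}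
  {b : Fin N → ℝ} {d : Fin S → ℝ} {γ : Fin N → ℝ}

theorem eventually_scenario_feasible_update (hfeas : FeasTau X z y qbar τ w b d γ) {n : Fin N}
    {u : Fin (M n) → ℝ} (hu : ∀ s ∈ activeScenarios X z y qbar τ w b n, z n s ⬝ᵥ u = 0)
    (s : Fin S) :
    ∀ᶠ t in 𝓝 (0 : ℝ), (∀ m, |qval z (Function.update w n (w n - t • u)) b m s| ≤ qbar m s) ∧
      e2 (vdev X z y (Function.update w n (w n - t • u)) b s) ≤ d s + τ := by
  simp only [qval_update_sub_smul, vdev_update_sub_smul]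
  by_cases hs : s ∈ activeScenarios X z y qbar τ w b n
  · refine .of_forall fun t => ?_
    simp only [hu s hs, Pi.single_zero, Pi.zero_apply, mul_zero, smul_zero, sub_zero]
    exact ⟨fun m => hfeas.1 m s, (hfeas.2.2 s).2⟩
  · simp only [activeScenarios, Set.mem_ofPred_eq, not_or, not_le] at hs
    have hQ : Continuous fun t : ℝ =>
        (fun m => qval z w b m s) - t • Pi.single n (z n s ⬝ᵥ u) := by
      fun_prop
    have hvdev : ∀ᶠ t in 𝓝 (0 : ℝ),
        e2 (X *ᵥ ((fun m => qval z w b m s) - t • Pi.single n (z n s ⬝ᵥ u)) + y s) < τ := by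
      have hcont : Continuous fun t : ℝ =>
          e2 (X *ᵥ ((fun m => qval z w b m s) - t • Pi.single n (z n s ⬝ᵥ u)) + y s) :=
        continuous_e2.comp ((continuous_const.matrix_mulVec hQ).add continuous_const)
      refine (hcont.tendsto' 0 (e2 (vdev X z y w b s)) ?_).eventually_lt_const hs.1
      simp [vdev]
    refine (Filter.eventually_all.mpr fun m => ?_).and
      (hvdev.mono fun t ht => ht.le.trans (le_add_of_nonneg_left (hfeas.2.2 s).1))
    rcases eq_or_ne m n with rfl | hm
    · have hcont := ((continuous_apply m).comp hQ).abs
      exact ((hcont.tendsto' 0 _ (by simp)).eventually_lt_const hs.2).mono fun t ht => ht.le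
    · exact .of_forall fun t => by simpa [hm] using hfeas.1 m s

theorem eventually_feasTau_update (hfeas : FeasTau X z y qbar τ w b d γ) {n : Fin N}
    {u : Fin (M n) → ℝ} (hu : ∀ s ∈ activeScenarios X z y qbar τ w b n, z n s ⬝ᵥ u = 0) :
    ∀ᶠ t in 𝓝 (0 : ℝ), FeasTau X z y qbar τ (Function.update w n (w n - t • u)) b d
      (Function.update γ n (e2 (w n - t • u))) := by
  filter_upwards [Filter.eventually_all.mpr (eventually_scenario_feasible_update hfeas hu)]
    with t ht
  refine ⟨fun m s => (ht s).1 m, fun m => ?_, fun s => ⟨(hfeas.2.2 s).1, (ht s).2⟩⟩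
  rcases eq_or_ne m n with rfl | hm
  · simp
  · simpa [Function.update_of_ne hm] using hfeas.2.1 m

theorem Fobj_update_lt {μ : ℝ} (hμ : 0 < μ) (d : Fin S → ℝ) {n : Fin N} {c : ℝ}
    (hc : c < γ n) : Fobj μ d (Function.update γ n c) < Fobj μ d γ := by
  have hsum : ∑ m, Function.update γ n c m < ∑ m, γ m := by
    refine Finset.sum_lt_sum (fun m _ => ?_) ⟨n, Finset.mem_univ n, by simpa using hc⟩
    rcases eq_or_ne m n with rfl | hm
    · simpa using hc.le
    · simp [hm]
  unfold Fobj
  gcongr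

theorem mem_span_activeScenarios {μ : ℝ} (hμ : 0 < μ) (hfeas : FeasTau X z y qbar τ w b d γ)
    (hmin : ∀ w' b' d' γ', FeasTau X z y qbar τ w' b' d' γ' → Fobj μ d γ ≤ Fobj μ d' γ')
    (n : Fin N) : w n ∈ Submodule.span ℝ (z n '' activeScenarios X z y qbar τ w b n) := by
  by_contra hw
  obtain ⟨u, hu, hwu⟩ := Submodule.exists_dotProduct_eq_one_of_notMem hw
  have hperp : ∀ s ∈ activeScenarios X z y qbar τ w b n, z n s ⬝ᵥ u = 0 :=
    fun s hs => hu _ (Submodule.subset_span ⟨s, hs, rfl⟩)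
  obtain ⟨t, hfeas', hlt⟩ :=
    ((eventually_feasTau_update hfeas hperp).filter_mono nhdsWithin_le_nhds).and
      (eventually_e2_sub_smul_lt (hwu ▸ one_pos)) |>.exists
  exact (hmin _ b d _ hfeas').not_gt (Fobj_update_lt hμ d (hlt.trans_le (hfeas.2.1 n)))

end Ptau

theorem sparsity_of_minimizer_Ptau_general
    {N S : ℕ}
    {M : Fin N → ℕ}
    (X : Matrix (Fin N) (Fin N) ℝ)
    (z : (n : Fin N) → Fin S → Fin (M n) → ℝ)
    (y : Fin S → Fin N → ℝ)
    (qbar : Fin N → Fin S → ℝ)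
    (μ τ : ℝ) (hμ : 0 < μ)
    (w : (n : Fin N) → Fin (M n) → ℝ) (b : Fin N → ℝ)
    (d : Fin S → ℝ) (γ : Fin N → ℝ)
    (hfeas : FeasTau X z y qbar τ w b d γ)
    (hmin : ∀ w' b' d' γ', FeasTau X z y qbar τ w' b' d' γ' →
      Fobj μ d γ ≤ Fobj μ d' γ') :
    ∃ a : Fin N → Fin S → ℝ,
      (∀ n, ∀ i, w n i = ∑ s, z n s i * a n s) ∧
      (∀ s, e2 (vdev X z y w b s) < τ →
        ∀ n, |qval z w b n s| < qbar n s → a n s = 0) := by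
  choose a ha using fun n =>
    Submodule.exists_sum_smul_eq_of_mem_span_image (mem_span_activeScenarios hμ hfeas hmin n)
  refine ⟨a, fun n i => ?_, fun s hs n hn => (ha n).2 s ?_⟩
  · rw [← (ha n).1, Finset.sum_apply]
    simp [mul_comm]
  · simp [activeScenarios, hs, hn]

/-- any minimizer of `P_τ` admits a representation `w*_n = Z_n a_n`, where
`a_{n,s} = 0` for every scenario `s` with `‖X q*_s + y_s‖₂ < τ` and every inverter `n`
with `|q*_{n,s}| < q̄_{n,s}`. -/
theorem sparsity_of_minimizer_Ptau
    {N S : ℕ} (hN : 1 ≤ N) (hS : 1 ≤ S)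
    {M : Fin N → ℕ} (hM : ∀ n, 1 ≤ M n)
    (X : Matrix (Fin N) (Fin N) ℝ)
    (z : (n : Fin N) → Fin S → Fin (M n) → ℝ)
    (y : Fin S → Fin N → ℝ)
    (qbar : Fin N → Fin S → ℝ)
    (μ τ : ℝ) (hμ : 0 < μ) (hτ : 0 < τ)
    (hqbar : ∀ n s, 0 < qbar n s)
    (w : (n : Fin N) → Fin (M n) → ℝ) (b : Fin N → ℝ)
    (d : Fin S → ℝ) (γ : Fin N → ℝ)
    (hfeas : FeasTau X z y qbar τ w b d γ)
    (hmin : ∀ w' b' d' γ', FeasTau X z y qbar τ w' b' d' γ' →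
      Fobj μ d γ ≤ Fobj μ d' γ') :
    ∃ a : Fin N → Fin S → ℝ,
      (∀ n, ∀ i, w n i = ∑ s, z n s i * a n s) ∧
      (∀ s, e2 (vdev X z y w b s) < τ →
        ∀ n, |qval z w b n s| < qbar n s → a n s = 0) :=
  sparsity_of_minimizer_Ptau_general X z y qbar μ τ hμ w b d γ hfeas hmin
end

section
/- Weak duality for P_τ: let (w, b, d, γ) be feasible for problem P_τ, and let λ̄_n, λ̲_n ∈ ℝ^S with nonnegative entries (n = 1,…,N), an N×S real matrix M with s-th column μ_s ∈ ℝ^N, and σ ∈ ℝ^S satisfy: (λ̄_n − λ̲_n)ᵀ1 = x_nᵀM1 for all n (1 the all-ones vector of length S); ‖Z_n(λ̄_n − λ̲_n − Mᵀx_n)‖₂ ≤ μ for all n; and ‖μ_s‖₂ ≤ σ_s ≤ 1/S for all s. Then −Σ_{n=1}^N (λ̄_n + λ̲_n)ᵀq̄_n − Σ_{s=1}^S μ_sᵀy_s − τ·Σ_{s=1}^S σ_s ≤ (1/S)·Σ_{s=1}^S d_s + μ·Σ_{n=1}^N γ_n. -/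
open Finset

/-- Feasibility of multipliers `(λ̄, λ̲, M, σ)` for the dual problem `D_τ`.
Here `Mm m s` is the `(m,s)` entry of the `N×S` matrix `M`, whose `s`-th column is `μ_s`. -/
def DualFeasTau {N S : ℕ} {M : Fin N → ℕ}
    (X : Matrix (Fin N) (Fin N) ℝ)
    (z : (n : Fin N) → Fin S → Fin (M n) → ℝ)
    (μ : ℝ)
    (lamU lamL : Fin N → Fin S → ℝ)
    (Mm : Fin N → Fin S → ℝ) (σ : Fin S → ℝ) : Prop :=
  (∀ n s, 0 ≤ lamU n s) ∧ (∀ n s, 0 ≤ lamL n s) ∧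
  (∀ n, ∑ s, (lamU n s - lamL n s) = ∑ m, X m n * ∑ s, Mm m s) ∧
  (∀ n, e2 (fun i => ∑ s, z n s i * (lamU n s - lamL n s - ∑ m, Mm m s * X m n)) ≤ μ) ∧
  (∀ s, e2 (fun m => Mm m s) ≤ σ s ∧ σ s ≤ 1 / (S : ℝ))

/-- Objective of the dual problem `D_τ`:
`−Σ_n (λ̄_n + λ̲_n)ᵀq̄_n − Σ_s μ_sᵀy_s − τ·Σ_s σ_s`. -/
noncomputable def DualObjTau {N S : ℕ}
    (y : Fin S → Fin N → ℝ) (qbar : Fin N → Fin S → ℝ) (τ : ℝ)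
    (lamU lamL : Fin N → Fin S → ℝ)
    (Mm : Fin N → Fin S → ℝ) (σ : Fin S → ℝ) : ℝ :=
  -(∑ n, ∑ s, (lamU n s + lamL n s) * qbar n s)
    - ∑ s, ∑ m, Mm m s * y s m - τ * ∑ s, σ s

/-! Weak duality is the Lagrangian bound. With `q_s = (z_{n,s}ᵀ w_n + b_n)_n` and
`α_n = λ̄_n − λ̲_n − Mᵀ x_n`, one has
`Σ_n Σ_s (λ̄ − λ̲)_{n,s} q_{n,s} − Σ_s μ_sᵀ X q_s = Σ_n Σ_s α_{n,s} q_{n,s} = Σ_n (Z_n α_n)ᵀ w_n`,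
where the last step uses `Σ_s α_{n,s} = 0` (the balance condition) to eliminate `b`. Each piece is
then bounded by its constraint: the box `|q| ≤ q̄` against `λ̄, λ̲ ≥ 0`, the cone
`‖X q_s + y_s‖ ≤ d_s + τ` against `‖μ_s‖ ≤ σ_s ≤ 1/S`, and `‖w_n‖ ≤ γ_n` against
`‖Z_n α_n‖ ≤ μ`, the last two by Cauchy–Schwarz. -/

open Matrix

lemma e2_nonneg {k : ℕ} (v : Fin k → ℝ) : 0 ≤ e2 v := Real.sqrt_nonneg _

lemma abs_dotProduct_le_e2_mul_e2 {k : ℕ} (u v : Fin k → ℝ) : |u ⬝ᵥ v| ≤ e2 u * e2 v := by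
  rw [← Real.sqrt_sq_eq_abs, e2, e2, ← Real.sqrt_mul (by positivity)]
  exact Real.sqrt_le_sqrt (sum_mul_sq_le_sq_mul_sq univ u v)

lemma abs_dotProduct_le_of_e2_le {k : ℕ} {u v : Fin k → ℝ} {a c : ℝ}
    (hu : e2 u ≤ a) (hv : e2 v ≤ c) : |u ⬝ᵥ v| ≤ a * c :=
  (abs_dotProduct_le_e2_mul_e2 u v).trans
    (mul_le_mul hu hv (e2_nonneg v) ((e2_nonneg u).trans hu))

lemma sub_mul_le_add_mul_of_abs_le {u l q r : ℝ} (hu : 0 ≤ u) (hl : 0 ≤ l) (hq : |q| ≤ r) :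
    (u - l) * q ≤ (u + l) * r := by
  obtain ⟨hq₁, hq₂⟩ := abs_le.mp hq
  nlinarith

lemma neg_dotProduct_sub_le_of_e2_le {k : ℕ} {m p y : Fin k → ℝ} {σ c d τ : ℝ}
    (hm : e2 m ≤ σ) (hσ : σ ≤ c) (hd : 0 ≤ d) (hpy : e2 (p + y) ≤ d + τ) :
    -(m ⬝ᵥ y) - τ * σ ≤ c * d + m ⬝ᵥ p := by
  have hcs : -(m ⬝ᵥ (p + y)) ≤ σ * (d + τ) :=
    (neg_le_abs _).trans (abs_dotProduct_le_of_e2_le hm hpy)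
  have hσd : σ * d ≤ c * d := mul_le_mul_of_nonneg_right hσ hd
  rw [dotProduct_add] at hcs
  linarith

lemma sum_mul_qval_eq_dotProduct {N S : ℕ} {M : Fin N → ℕ}
    (z : (n : Fin N) → Fin S → Fin (M n) → ℝ) (w : (n : Fin N) → Fin (M n) → ℝ)
    (b : Fin N → ℝ) (n : Fin N) {α : Fin S → ℝ} (hα : ∑ s, α s = 0) :
    ∑ s, α s * qval z w b n s = (fun i => ∑ s, z n s i * α s) ⬝ᵥ w n := by
  have hb : ∑ s, α s * b n = 0 := by rw [← sum_mul, hα, zero_mul]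
  simp only [qval, mul_add, sum_add_distrib, hb, add_zero, dotProduct, mul_sum, sum_mul]
  rw [sum_comm]
  exact sum_congr rfl fun _ _ => sum_congr rfl fun _ _ => by ring

lemma sum_dotProduct_mulVec {ι κ : Type*} [Fintype ι] [Fintype κ]
    (X : Matrix ι ι ℝ) (A Q : ι → κ → ℝ) :
    ∑ s, (fun m => A m s) ⬝ᵥ X *ᵥ (fun n => Q n s) = ∑ n, ∑ s, (∑ m, A m s * X m n) * Q n s := by
  simp only [dotProduct, mulVec, mul_sum, sum_mul, mul_assoc]
  exact (sum_congr rfl fun _ _ => sum_comm).trans sum_comm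

theorem weak_duality_Ptau_general
    {N S : ℕ}
    {M : Fin N → ℕ}
    (X : Matrix (Fin N) (Fin N) ℝ)
    (z : (n : Fin N) → Fin S → Fin (M n) → ℝ)
    (y : Fin S → Fin N → ℝ)
    (qbar : Fin N → Fin S → ℝ)
    (μ τ : ℝ)
    (w : (n : Fin N) → Fin (M n) → ℝ) (b : Fin N → ℝ)
    (d : Fin S → ℝ) (γ : Fin N → ℝ)
    (hfeas : FeasTau X z y qbar τ w b d γ)
    (lamU lamL : Fin N → Fin S → ℝ)
    (Mm : Fin N → Fin S → ℝ) (σ : Fin S → ℝ)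
    (hdual : DualFeasTau X z μ lamU lamL Mm σ) :
    DualObjTau y qbar τ lamU lamL Mm σ ≤ Fobj μ d γ := by
  obtain ⟨hq, hw, hd⟩ := hfeas
  obtain ⟨hU, hL, hbal, hZ, hσ⟩ := hdual
  set q := qval z w b
  set α : Fin N → Fin S → ℝ := fun n s => lamU n s - lamL n s - ∑ m, Mm m s * X m n
  set coupling := ∑ s, (fun m => Mm m s) ⬝ᵥ X *ᵥ (fun n => q n s)
  have hα : ∀ n, ∑ s, α n s = 0 := fun n => by
    simp only [α, sum_sub_distrib, hbal n, mul_sum, sub_eq_zero]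
    exact sum_comm.trans (sum_congr rfl fun _ _ => sum_congr rfl fun _ _ => mul_comm _ _)
  have hlag : ∑ n, ∑ s, α n s * q n s
      = ∑ n, ∑ s, (lamU n s - lamL n s) * q n s - coupling := by
    simp only [coupling, sum_dotProduct_mulVec, α, sub_mul, sum_sub_distrib]
  have hbox : ∑ n, ∑ s, (lamU n s - lamL n s) * q n s
      ≤ ∑ n, ∑ s, (lamU n s + lamL n s) * qbar n s :=
    sum_le_sum fun n _ => sum_le_sum fun s _ =>
      sub_mul_le_add_mul_of_abs_le (hU n s) (hL n s) (hq n s)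
  have hcone : -(∑ s, ∑ m, Mm m s * y s m) - τ * ∑ s, σ s ≤ 1 / S * ∑ s, d s + coupling := by
    have h := sum_le_sum fun s (_ : s ∈ univ) =>
      neg_dotProduct_sub_le_of_e2_le (hσ s).1 (hσ s).2 (hd s).1 (hd s).2
    simp only [sum_sub_distrib, sum_neg_distrib, sum_add_distrib, ← mul_sum] at h
    exact h
  have hrule : -(∑ n, ∑ s, α n s * q n s) ≤ μ * ∑ n, γ n := by
    rw [← sum_neg_distrib, mul_sum]
    refine sum_le_sum fun n _ => ?_
    rw [sum_mul_qval_eq_dotProduct z w b n (hα n)]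
    exact (neg_le_abs _).trans (abs_dotProduct_le_of_e2_le (hZ n) (hw n))
  rw [DualObjTau, Fobj]
  linarith

/-- weak duality for `P_τ`: every dual-feasible multiplier tuple gives a
lower bound on the primal objective at every primal-feasible point. -/
theorem weak_duality_Ptau
    {N S : ℕ} (hN : 1 ≤ N) (hS : 1 ≤ S)
    {M : Fin N → ℕ} (hM : ∀ n, 1 ≤ M n)
    (X : Matrix (Fin N) (Fin N) ℝ)
    (z : (n : Fin N) → Fin S → Fin (M n) → ℝ)
    (y : Fin S → Fin N → ℝ)
    (qbar : Fin N → Fin S → ℝ)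
    (μ τ : ℝ) (hμ : 0 < μ) (hτ : 0 < τ)
    (w : (n : Fin N) → Fin (M n) → ℝ) (b : Fin N → ℝ)
    (d : Fin S → ℝ) (γ : Fin N → ℝ)
    (hfeas : FeasTau X z y qbar τ w b d γ)
    (lamU lamL : Fin N → Fin S → ℝ)
    (Mm : Fin N → Fin S → ℝ) (σ : Fin S → ℝ)
    (hdual : DualFeasTau X z μ lamU lamL Mm σ) :
    DualObjTau y qbar τ lamU lamL Mm σ ≤ Fobj μ d γ :=
  weak_duality_Ptau_general X z y qbar μ τ w b d γ hfeas lamU lamL Mm σ hdual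
end
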